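/- arXiv:2203.04403 — 2 statements merged into one kernel-verified Lean document; each statement's English description precedes it below -/
import Mathlib

section
/- Let p ≥ K and let s : {1,…,p} → {1,…,K} be a parent map with s(j) = j for every j ∈ {1,…,K}. Let (s, θ, ν) and (s, θ, ν̄) be two valid BLESS parameter sets with the same parent map s and the same conditional probability tables θ. If their joint probability mass functions agree, P(y = c | s, θ, ν) = P(y = c | s, θ, ν̄) for every c ∈ {1,…,d}^p, then ν = ν̄. -/
open Finset

/-- Joint probability mass function of the observed vector `c : Fin p → Fin d` under the
BLESS model with parent map `s`, conditional probability tables `θ` (where `θ j c x` is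
`θ^{(j)}_{c|x}`), and latent proportion vector `ν`. -/
def blessPMF {K p d : ℕ} (s : Fin p → Fin K) (θ : Fin p → Fin d → Bool → ℝ)
    (ν : (Fin K → Bool) → ℝ) (c : Fin p → Fin d) : ℝ :=
  ∑ α : Fin K → Bool, ν α * ∏ j, θ j (c j) (α (s j))

/-- Validity of a BLESS parameter set `(θ, ν)`: all conditional probabilities strictly
between 0 and 1, columns of each conditional probability table summing to one, the
monotonicity constraint `θ^{(j)}_{c|1} > θ^{(j)}_{c|0}` for every non-last category `c`,
strictly positive proportions summing to one. -/
structure BlessValid {K p d : ℕ} (θ : Fin p → Fin d → Bool → ℝ)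
    (ν : (Fin K → Bool) → ℝ) : Prop where
  theta_pos : ∀ j c x, 0 < θ j c x
  theta_lt_one : ∀ j c x, θ j c x < 1
  theta_sum : ∀ j x, ∑ c, θ j c x = 1
  theta_mono : ∀ j (c : Fin d), (c : ℕ) + 1 < d → θ j c false < θ j c true
  nu_pos : ∀ α, 0 < ν α
  nu_sum : ∑ α, ν α = 1


/-!
Identifiability of `ν` is a statement about linear independence of the functions
`α ↦ P(y = c | α)`. Testing the difference `ν - ν̄` against product functions
`∏ⱼ uⱼ(yⱼ)` turns the equality of distributions into
`∑_α (ν - ν̄)_α ∏ⱼ (∑_c uⱼ(c) θ^{(j)}_{c|α_{s(j)}}) = 0`. For the anchor items `j = k ≤ K`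
choose `uⱼ` to be either `1` or the indicator of the first category, and `uⱼ = 1` otherwise; the
factor of item `k` is then `1` or `θ^{(k)}_{1|α_k}`. Since `θ^{(k)}_{1|0} ≠ θ^{(k)}_{1|1}`, the
vectors `(1, 1)` and `(θ^{(k)}_{1|0}, θ^{(k)}_{1|1})` form a basis of `ℝ^{Bool}`, and so do their
tensor products over `k`; hence `ν - ν̄ = 0`.
-/

theorem Fin.sum_univ_pi_succ {n : ℕ} {β M : Type*} [Fintype β] [AddCommMonoid M]
    (F : (Fin (n + 1) → β) → M) :
    ∑ α, F α = ∑ b, ∑ γ : Fin n → β, F (Fin.cons b γ) := by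
  rw [← (Fin.consEquiv fun _ => β).sum_comp, Fintype.sum_prod_type]
  rfl

theorem eq_zero_of_sum_mul_prod_ite_eq_zero {K : ℕ} (w : Fin K → Bool → ℝ)
    (hw : ∀ k, w k false ≠ w k true) (g : (Fin K → Bool) → ℝ)
    (hg : ∀ c : Fin K → Bool, ∑ α, g α * ∏ k, (if c k then w k (α k) else 1) = 0) :
    g = 0 := by
  induction K with
  | zero =>
    funext α
    simpa [Unique.eq_default α] using hg default
  | succ n ih =>
    set φ : Bool → Bool → ℝ := fun cb b => if cb then w 0 b else 1
    have hsplit : ∀ cb, (fun β => ∑ b, φ cb b * g (Fin.cons b β)) = 0 := by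
      intro cb
      refine ih (fun k => w k.succ) (fun k => hw k.succ) _ fun c => ?_
      rw [← hg (Fin.cons cb c), Fin.sum_univ_pi_succ, Finset.sum_comm]
      simp only [Finset.sum_mul, Fin.prod_univ_succ, Fin.cons_zero, Fin.cons_succ]
      refine Finset.sum_congr rfl fun β _ => Finset.sum_congr rfl fun b _ => ?_
      ring
    have hfalse := fun β => congrFun (hsplit false) β
    have htrue := fun β => congrFun (hsplit true) β
    simp only [φ, Fintype.sum_bool, Bool.false_eq_true, if_false, if_true, one_mul,
      Pi.zero_apply] at hfalse htrue
    have hcons_true : ∀ β, g (Fin.cons true β) = 0 := fun β => by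
      have : (w 0 true - w 0 false) * g (Fin.cons true β) = 0 := by
        linear_combination htrue β - w 0 false * hfalse β
      exact (mul_eq_zero.mp this).resolve_left (sub_ne_zero.mpr (hw 0).symm)
    funext α
    rw [Pi.zero_apply, ← Fin.cons_self_tail α]
    cases α 0
    · linear_combination hfalse (Fin.tail α) - hcons_true (Fin.tail α)
    · exact hcons_true (Fin.tail α)

theorem blessPMF_sub {K p d : ℕ} (s : Fin p → Fin K) (θ : Fin p → Fin d → Bool → ℝ)
    (ν νb : (Fin K → Bool) → ℝ) (c : Fin p → Fin d) :
    blessPMF s θ (ν - νb) c = blessPMF s θ ν c - blessPMF s θ νb c := by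
  simp only [blessPMF, Pi.sub_apply, sub_mul, Finset.sum_sub_distrib]

theorem sum_prod_mul_blessPMF {K p d : ℕ} (s : Fin p → Fin K) (θ : Fin p → Fin d → Bool → ℝ)
    (ν : (Fin K → Bool) → ℝ) (u : Fin p → Fin d → ℝ) :
    ∑ y, (∏ j, u j (y j)) * blessPMF s θ ν y
      = ∑ α, ν α * ∏ j, ∑ c, u j c * θ j c (α (s j)) := by
  simp only [blessPMF, Finset.mul_sum, Fintype.prod_sum, Finset.prod_mul_distrib]
  rw [Finset.sum_comm]
  refine Finset.sum_congr rfl fun α _ => Finset.sum_congr rfl fun y _ => ?_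
  ring

def anchorTest {K p d : ℕ} (c₀ : Fin d) (c : Fin K → Bool) (j : Fin p) (y : Fin d) : ℝ :=
  if h : (j : ℕ) < K then (if c ⟨j, h⟩ then (if y = c₀ then 1 else 0) else 1) else 1

theorem prod_sum_anchorTest_mul {K p d : ℕ} (hp : K ≤ p) (s : Fin p → Fin K)
    (hs : ∀ j : Fin K, s (Fin.castLE hp j) = j) (θ : Fin p → Fin d → Bool → ℝ)
    (hθ : ∀ j x, ∑ c, θ j c x = 1) (c₀ : Fin d) (c : Fin K → Bool) (α : Fin K → Bool) :
    ∏ j, ∑ y, anchorTest c₀ c j y * θ j y (α (s j))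
      = ∏ k, if c k then θ (Fin.castLE hp k) c₀ (α k) else 1 := by
  symm
  refine Fintype.prod_of_injective _ (Fin.castLE_injective hp) _ _ (fun j hj => ?_) fun k => ?_
  · have hjK : ¬ (j : ℕ) < K := fun h => hj ⟨⟨j, h⟩, rfl⟩
    simp [anchorTest, hjK, hθ]
  · cases hc : c k <;> simp [anchorTest, hc, hθ, hs]

theorem bless_nu_identifiable_general {K p d : ℕ} (hd : 2 ≤ d) (hp : K ≤ p)
    (s : Fin p → Fin K) (hs : ∀ j : Fin K, s (Fin.castLE hp j) = j)
    (θ : Fin p → Fin d → Bool → ℝ) (ν νb : (Fin K → Bool) → ℝ)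
    (h1 : BlessValid θ ν)
    (heq : ∀ c, blessPMF s θ ν c = blessPMF s θ νb c) :
    ν = νb := by
  let c₀ : Fin d := ⟨0, by omega⟩
  rw [← sub_eq_zero]
  refine eq_zero_of_sum_mul_prod_ite_eq_zero (fun k => θ (Fin.castLE hp k) c₀)
    (fun k => (h1.theta_mono _ c₀ (by simp [c₀]; omega)).ne) _ fun c => ?_
  simp only [← prod_sum_anchorTest_mul hp s hs θ h1.theta_sum c₀ c, ← sum_prod_mul_blessPMF,
    blessPMF_sub, heq, sub_self, mul_zero, Finset.sum_const_zero]

/-- if the parent map satisfies `s(j) = j` for `j ∈ {1,…,K}` and two valid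
BLESS parameter sets share the same parent map and the same conditional probability
tables `θ`, then agreement of the joint distributions forces `ν = ν̄`. -/
theorem bless_nu_identifiable {K p d : ℕ} (hd : 2 ≤ d) (hp : K ≤ p)
    (s : Fin p → Fin K) (hs : ∀ j : Fin K, s (Fin.castLE hp j) = j)
    (θ : Fin p → Fin d → Bool → ℝ) (ν νb : (Fin K → Bool) → ℝ)
    (h1 : BlessValid θ ν) (h2 : BlessValid θ νb)
    (heq : ∀ c, blessPMF s θ ν c = blessPMF s θ νb c) :
    ν = νb :=
  bless_nu_identifiable_general hd hp s hs θ ν νb h1 heq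
end

section
/- Consider the BLESS model with p = 2K observed variables and the parent map s given by s(j) = j and s(K + j) = j for every j ∈ {1,…,K} (so each latent variable α_k has exactly the two observed children y_k and y_{K+k}). Let (s, θ, ν) and (s, θ̄, ν̄) be two valid parameter sets with this common parent map whose joint probability mass functions agree. Then for every k ∈ {1,…,K}, every c ∈ {1,…,d−1}, and every α' ∈ {0,1}^K with α'_k = 0, the following equation holds: ν_{α'}·(θ^{(k)}_{c|0} − θ̄^{(k)}_{c|0})·(θ^{(K+k)}_{c|0} − θ̄^{(K+k)}_{c|1}) + ν_{α'+e_k}·(θ^{(k)}_{c|1} − θ̄^{(k)}_{c|0})·(θ^{(K+k)}_{c|1} − θ̄^{(K+k)}_{c|1}) = 0, where α' + e_k denotes the pattern obtained from α' by changing its k-th coordinate to 1. -/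
open Finset

/-- The "doubled" parent map on `p = 2K` observed variables: `s(j) = j` and
`s(K + j) = j` for `j ∈ {1,…,K}`, so each latent variable `α_k` has exactly the two
observed children `y_k` and `y_{K+k}`. -/
def sdup (K : ℕ) : Fin (K + K) → Fin K := fun j =>
  if h : (j : ℕ) < K then ⟨j, h⟩ else ⟨(j : ℕ) - K, by have := j.isLt; omega⟩

lemma sdup_castAdd {K : ℕ} (k : Fin K) : sdup K (Fin.castAdd K k) = k := by
  simp [sdup, Fin.castAdd, k.isLt]

lemma sdup_natAdd {K : ℕ} (k : Fin K) : sdup K (Fin.natAdd K k) = k := by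
  simp only [sdup, Fin.natAdd]
  rw [dif_neg (by omega)]
  ext; simp

lemma castAdd_lt {K : ℕ} (k : Fin K) : ((Fin.castAdd K k : Fin (K+K)) : ℕ) < K := k.isLt

lemma natAdd_not_lt {K : ℕ} (k : Fin K) : ¬ ((Fin.natAdd K k : Fin (K+K)) : ℕ) < K := by
  simp [Fin.natAdd]

lemma blessPMF_weighted {K p d : ℕ} (s : Fin p → Fin K) (θ : Fin p → Fin d → Bool → ℝ)
    (ν : (Fin K → Bool) → ℝ) (w : Fin p → Fin d → ℝ) :
    ∑ c : Fin p → Fin d, (∏ j, w j (c j)) * blessPMF s θ ν c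
    = ∑ α : Fin K → Bool, ν α * ∏ j, ∑ e, w j e * θ j e (α (s j)) := by
  unfold blessPMF
  simp_rw [Finset.mul_sum]
  rw [Finset.sum_comm]
  refine Finset.sum_congr rfl fun α _ => ?_
  rw [Finset.prod_univ_sum fun _ => (univ : Finset (Fin d)), Fintype.piFinset_univ,
    Finset.mul_sum]
  refine Finset.sum_congr rfl fun c _ => ?_
  rw [Finset.prod_mul_distrib]
  ring

lemma dot_ind {d : ℕ} (f : Fin d → ℝ) (hsum : ∑ e, f e = 1) (c₀ : Fin d) (t : ℝ) :
    ∑ e, ((if e = c₀ then (1:ℝ) else 0) - t) * f e = f c₀ - t := by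
  simp [sub_mul, Finset.sum_sub_distrib, ite_mul, Finset.sum_ite_eq', ← Finset.mul_sum, hsum]

/-- under the doubled parent map, if two valid parameter sets give the same
joint distribution, then for every latent index `k`, non-last category `c`, and pattern
`α'` with `α'_k = 0`, the key bilinear equation
`ν_{α'}(θ^{(k)}_{c|0} − θ̄^{(k)}_{c|0})(θ^{(K+k)}_{c|0} − θ̄^{(K+k)}_{c|1}) +
 ν_{α'+e_k}(θ^{(k)}_{c|1} − θ̄^{(k)}_{c|0})(θ^{(K+k)}_{c|1} − θ̄^{(K+k)}_{c|1}) = 0`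
holds. -/
theorem bless_key_equation {K d : ℕ} (hd : 2 ≤ d)
    (θ θb : Fin (K + K) → Fin d → Bool → ℝ) (ν νb : (Fin K → Bool) → ℝ)
    (h1 : BlessValid θ ν) (h2 : BlessValid θb νb)
    (heq : ∀ c, blessPMF (sdup K) θ ν c = blessPMF (sdup K) θb νb c) :
    ∀ (k : Fin K) (c : Fin d), (c : ℕ) + 1 < d →
      ∀ α' : Fin K → Bool, α' k = false →
        ν α' * (θ (Fin.castAdd K k) c false - θb (Fin.castAdd K k) c false)
             * (θ (Fin.natAdd K k) c false - θb (Fin.natAdd K k) c true)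
        + ν (Function.update α' k true)
             * (θ (Fin.castAdd K k) c true - θb (Fin.castAdd K k) c false)
             * (θ (Fin.natAdd K k) c true - θb (Fin.natAdd K k) c true) = 0 := by
  intro k c hc α' hα'
  classical
  set z : Fin d := ⟨0, by omega⟩ with hz
  have hz1 : (z : ℕ) + 1 < d := by simp [hz]; omega
  -- the weighting functional
  set w : Fin (K + K) → Fin d → ℝ := fun j e =>
    if (j : ℕ) < K then
      (if sdup K j = k then (if e = c then 1 else 0) - θb j c false
       else ((if e = z then 1 else 0) - θ j z (!(α' (sdup K j)))) /
            (θ j z (α' (sdup K j)) - θ j z (!(α' (sdup K j)))))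
    else
      (if sdup K j = k then (if e = c then 1 else 0) - θb j c true else 1)
    with hw
  -- per-coordinate dot products, θ side
  have fact_k1 : ∀ x : Bool,
      (∑ e, w (Fin.castAdd K k) e * θ (Fin.castAdd K k) e x)
        = θ (Fin.castAdd K k) c x - θb (Fin.castAdd K k) c false := by
    intro x
    have : ∀ e, w (Fin.castAdd K k) e = (if e = c then (1:ℝ) else 0) - θb (Fin.castAdd K k) c false := by
      intro e
      simp only [hw, castAdd_lt k, if_true, sdup_castAdd, if_pos rfl]
    simp_rw [this]
    exact dot_ind _ (h1.theta_sum _ x) c _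
  have fact_k1b : ∀ x : Bool,
      (∑ e, w (Fin.castAdd K k) e * θb (Fin.castAdd K k) e x)
        = θb (Fin.castAdd K k) c x - θb (Fin.castAdd K k) c false := by
    intro x
    have : ∀ e, w (Fin.castAdd K k) e = (if e = c then (1:ℝ) else 0) - θb (Fin.castAdd K k) c false := by
      intro e
      simp only [hw, castAdd_lt k, if_true, sdup_castAdd, if_pos rfl]
    simp_rw [this]
    exact dot_ind _ (h2.theta_sum _ x) c _
  have fact_k2 : ∀ x : Bool,
      (∑ e, w (Fin.natAdd K k) e * θ (Fin.natAdd K k) e x)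
        = θ (Fin.natAdd K k) c x - θb (Fin.natAdd K k) c true := by
    intro x
    have : ∀ e, w (Fin.natAdd K k) e = (if e = c then (1:ℝ) else 0) - θb (Fin.natAdd K k) c true := by
      intro e
      simp only [hw, natAdd_not_lt k, if_false, if_true, sdup_natAdd, if_pos rfl]
    simp_rw [this]
    exact dot_ind _ (h1.theta_sum _ x) c _
  have fact_k2b : ∀ x : Bool,
      (∑ e, w (Fin.natAdd K k) e * θb (Fin.natAdd K k) e x)
        = θb (Fin.natAdd K k) c x - θb (Fin.natAdd K k) c true := by
    intro x
    have : ∀ e, w (Fin.natAdd K k) e = (if e = c then (1:ℝ) else 0) - θb (Fin.natAdd K k) c true := by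
      intro e
      simp only [hw, natAdd_not_lt k, if_false, if_true, sdup_natAdd, if_pos rfl]
    simp_rw [this]
    exact dot_ind _ (h2.theta_sum _ x) c _
  have fact_m1 : ∀ (m : Fin K), m ≠ k → ∀ x : Bool,
      (∑ e, w (Fin.castAdd K m) e * θ (Fin.castAdd K m) e x)
        = if x = α' m then 1 else 0 := by
    intro m hm x
    have hD : θ (Fin.castAdd K m) z (α' m) - θ (Fin.castAdd K m) z (!(α' m)) ≠ 0 := by
      have := h1.theta_mono (Fin.castAdd K m) z hz1
      cases hb : α' m <;> simp [hb] <;> nlinarith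
    have : ∀ e, w (Fin.castAdd K m) e =
        ((if e = z then (1:ℝ) else 0) - θ (Fin.castAdd K m) z (!(α' m))) /
          (θ (Fin.castAdd K m) z (α' m) - θ (Fin.castAdd K m) z (!(α' m))) := by
      intro e
      simp only [hw, castAdd_lt m, if_true, sdup_castAdd, if_neg hm]
    simp_rw [this, div_mul_eq_mul_div, ← Finset.sum_div,
      dot_ind _ (h1.theta_sum (Fin.castAdd K m) x) z _]
    rcases Bool.eq_false_or_eq_true x with hx | hx <;>
      rcases Bool.eq_false_or_eq_true (α' m) with hb | hb <;>
        simp only [hx, hb] at hD ⊢ <;>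
          simp_all [div_self, sub_self]
  have fact_m2 : ∀ (m : Fin K), m ≠ k → ∀ x : Bool,
      (∑ e, w (Fin.natAdd K m) e * θ (Fin.natAdd K m) e x) = 1 := by
    intro m hm x
    have : ∀ e, w (Fin.natAdd K m) e = 1 := by
      intro e
      simp only [hw, natAdd_not_lt m, if_false, sdup_natAdd, if_neg hm]
    simp_rw [this, one_mul]
    exact h1.theta_sum _ x
  -- the two sides of the weighted identity
  have HW : (∑ α : Fin K → Bool, ν α * ∏ j, ∑ e, w j e * θ j e (α (sdup K j)))
      = ∑ α : Fin K → Bool, νb α * ∏ j, ∑ e, w j e * θb j e (α (sdup K j)) := by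
    rw [← blessPMF_weighted, ← blessPMF_weighted]
    exact Finset.sum_congr rfl fun c _ => by rw [heq c]
  -- RHS is zero
  have hRHS : (∑ α : Fin K → Bool, νb α * ∏ j, ∑ e, w j e * θb j e (α (sdup K j))) = 0 := by
    refine Finset.sum_eq_zero fun α _ => ?_
    cases hk : α k with
    | false =>
      have : (∑ e, w (Fin.castAdd K k) e * θb (Fin.castAdd K k) e (α (sdup K (Fin.castAdd K k)))) = 0 := by
        rw [sdup_castAdd, hk, fact_k1b, sub_self]
      rw [Finset.prod_eq_zero (Finset.mem_univ (Fin.castAdd K k)) this, mul_zero]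
    | true =>
      have : (∑ e, w (Fin.natAdd K k) e * θb (Fin.natAdd K k) e (α (sdup K (Fin.natAdd K k)))) = 0 := by
        rw [sdup_natAdd, hk, fact_k2b, sub_self]
      rw [Finset.prod_eq_zero (Finset.mem_univ (Fin.natAdd K k)) this, mul_zero]
  -- evaluate the LHS
  set A : Bool → ℝ := fun x => θ (Fin.castAdd K k) c x - θb (Fin.castAdd K k) c false with hA
  set B : Bool → ℝ := fun x => θ (Fin.natAdd K k) c x - θb (Fin.natAdd K k) c true with hB
  have hα'ne : α' ≠ Function.update α' k true := by
    intro h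
    have := congrFun h k
    rw [Function.update_self, hα'] at this
    exact Bool.false_ne_true this
  have hP : ∀ α : Fin K → Bool,
      ν α * ∏ j, ∑ e, w j e * θ j e (α (sdup K j))
        = (if α = α' then ν α' * A false * B false else 0)
          + (if α = Function.update α' k true then ν (Function.update α' k true) * A true * B true else 0) := by
    intro α
    by_cases hag : ∀ m, m ≠ k → α m = α' m
    · have hPval : (∏ j, ∑ e, w j e * θ j e (α (sdup K j))) = A (α k) * B (α k) := by
        rw [Fin.prod_univ_add]
        have e1 : (∏ m : Fin K, ∑ e, w (Fin.castAdd K m) e * θ (Fin.castAdd K m) e (α (sdup K (Fin.castAdd K m))))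
            = A (α k) := by
          refine Finset.prod_eq_single_of_mem k (Finset.mem_univ k) (fun m _ hm => ?_) |>.trans ?_
          · rw [sdup_castAdd, fact_m1 m hm, if_pos (hag m hm)]
          · rw [sdup_castAdd, fact_k1]
        have e2 : (∏ m : Fin K, ∑ e, w (Fin.natAdd K m) e * θ (Fin.natAdd K m) e (α (sdup K (Fin.natAdd K m))))
            = B (α k) := by
          refine Finset.prod_eq_single_of_mem k (Finset.mem_univ k) (fun m _ hm => ?_) |>.trans ?_
          · rw [sdup_natAdd, fact_m2 m hm]
          · rw [sdup_natAdd, fact_k2]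
        rw [e1, e2]
      have hupd : α = Function.update α' k (α k) := by
        funext m
        by_cases h : m = k
        · subst h; rw [Function.update_self]
        · rw [Function.update_of_ne h, hag m h]
      cases hk : α k with
      | false =>
        have hαα' : α = α' := by rw [hupd, hk, ← hα', Function.update_eq_self]
        rw [hPval, hk, if_pos hαα', if_neg (hαα' ▸ hα'ne), add_zero, hαα']
        ring
      | true =>
        have hαu : α = Function.update α' k true := by rw [hupd, hk]
        rw [hPval, hk, if_neg (by rw [hαu]; exact hα'ne.symm), if_pos hαu, zero_add, hαu]
        ring
    · push_neg at hag
      obtain ⟨m, hm, hne⟩ := hag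
      have hzero : (∑ e, w (Fin.castAdd K m) e * θ (Fin.castAdd K m) e (α (sdup K (Fin.castAdd K m)))) = 0 := by
        rw [sdup_castAdd, fact_m1 m hm, if_neg hne]
      rw [Finset.prod_eq_zero (Finset.mem_univ (Fin.castAdd K m)) hzero, mul_zero]
      have h1' : α ≠ α' := fun h => hne (congrFun h m)
      have h2' : α ≠ Function.update α' k true := by
        intro h
        exact hne ((congrFun h m).trans (Function.update_of_ne hm _ _))
      rw [if_neg h1', if_neg h2', add_zero]
  have : ν α' * A false * B false + ν (Function.update α' k true) * A true * B true = 0 := by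
    have := HW.trans hRHS
    rw [Finset.sum_congr rfl (fun α _ => hP α), Finset.sum_add_distrib,
      Finset.sum_ite_eq' univ α', Finset.sum_ite_eq' univ (Function.update α' k true),
      if_pos (Finset.mem_univ _), if_pos (Finset.mem_univ _)] at this
    exact this
  simpa [hA, hB] using this
end
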